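/- arXiv:1710.09822 — 4 statements merged into one kernel-verified Lean document; each statement's English description precedes it below -/
import Mathlib

section
/- Let p be a prime, R a commutative ring of characteristic p, and t : ℕ → R a sequence. Let N be the Newton sequence of t. Then for every n ≥ 1 one has N(p·n) = (N(n))^p. -/
/-!
Both sides are integer polynomials in `t 1, …, t (p * n)`, so it suffices to prove the identity
for the generic sequence of variables `X 0, …, X (p * n - 1)` over `R`. Substituting the elementary
symmetric polynomials for these variables is injective (fundamental theorem of symmetric
polynomials) and, by Newton's identities, turns the Newton sequence into the power sums. In
characteristic `p` the Frobenius is additive, so `∑ xᵢ ^ (p * n) = (∑ xᵢ ^ n) ^ p`.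
-/

/-- The Newton sequence of a sequence `t : ℕ → R`:
`N 0 = 0`, `N 1 = t 1`, and for `n ≥ 2`,
`N n = (∑_{k=1}^{n-1} (-1)^(k-1) * t k * N (n-k)) + (-1)^(n-1) * n * t n`. -/
noncomputable def newton {R : Type*} [CommRing R] (t : ℕ → R) : ℕ → R
  | 0 => 0
  | 1 => t 1
  | n + 2 =>
      (∑ k ∈ (Finset.Icc 1 (n + 1)).attach,
        (-1 : R) ^ ((k : ℕ) - 1) * t (k : ℕ) * newton t (n + 2 - (k : ℕ)))
      + (-1 : R) ^ (n + 1) * ((n + 2 : ℕ) : R) * t (n + 2)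
decreasing_by
  have hk := k.2
  simp only [Finset.mem_Icc] at hk
  omega

open Finset MvPolynomial

section

variable {R S : Type*} [CommRing R] [CommRing S]

theorem newton_add_two (t : ℕ → R) (n : ℕ) :
    newton t (n + 2) = ∑ k ∈ Icc 1 (n + 1), (-1) ^ (k - 1) * t k * newton t (n + 2 - k)
      + (-1) ^ (n + 1) * ((n + 2 : ℕ) : R) * t (n + 2) := by
  rw [newton, sum_attach (Icc 1 (n + 1)) fun k => (-1) ^ (k - 1) * t k * newton t (n + 2 - k)]

theorem map_newton (f : R →+* S) (t : ℕ → R) (n : ℕ) :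
    f (newton t n) = newton (f ∘ t) n := by
  induction n using Nat.strong_induction_on with
  | _ n ih =>
    match n with
    | 0 => simp [newton]
    | 1 => simp [newton]
    | n + 2 =>
      simp only [newton_add_two, map_add, map_sum, map_mul, map_pow, map_neg, map_one,
        map_natCast, Function.comp_apply]
      congr 1
      refine sum_congr rfl fun k hk => ?_
      rw [ih _ (by simp only [mem_Icc] at hk; omega)]

theorem newton_congr {t s : ℕ → R} {n : ℕ} (h : ∀ k ∈ Icc 1 n, t k = s k) :
    newton t n = newton s n := by
  induction n using Nat.strong_induction_on with
  | _ n ih =>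
    match n with
    | 0 => simp [newton]
    | 1 => simp [newton, h 1 (by simp)]
    | n + 2 =>
      rw [newton_add_two, newton_add_two, h (n + 2) (by simp)]
      congr 1
      refine sum_congr rfl fun k hk => ?_
      simp only [mem_Icc] at hk h
      rw [h k (by omega), ih _ (by omega) fun j hj => h j (by simp only [mem_Icc] at hj; omega)]

theorem sum_antidiagonal_filter_Ioo {M : Type*} [AddCommMonoid M] (f : ℕ → ℕ → M) (n : ℕ) :
    ∑ a ∈ antidiagonal n with a.1 ∈ Set.Ioo 0 n, f a.1 a.2 = ∑ k ∈ Icc 1 (n - 1), f k (n - k) := by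
  refine sum_nbij' (fun a => a.1) (fun k => (k, n - k)) ?_ ?_ ?_ ?_ ?_
  · intro a ha
    simp only [mem_filter, HasAntidiagonal.mem_antidiagonal, Set.mem_Ioo] at ha
    simp only [mem_Icc]
    omega
  · intro k hk
    simp only [mem_Icc] at hk
    simp only [mem_filter, HasAntidiagonal.mem_antidiagonal, Set.mem_Ioo]
    omega
  · intro a ha
    simp only [mem_filter, HasAntidiagonal.mem_antidiagonal, Set.mem_Ioo] at ha
    ext <;> simp only; omega
  · intro k _
    rfl
  · intro a ha
    simp only [mem_filter, HasAntidiagonal.mem_antidiagonal] at ha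
    rw [← ha.1, Nat.add_sub_cancel_left]

theorem newton_esymm (σ : Type*) [Fintype σ] [DecidableEq σ] {n : ℕ} (hn : 1 ≤ n) :
    newton (esymm σ R) n = psum σ R n := by
  induction n using Nat.strong_induction_on with
  | _ n ih =>
    match n, hn with
    | 1, _ => rw [newton, psum_one, esymm_one]
    | n + 2, _ =>
      rw [newton_add_two, psum_eq_mul_esymm_sub_sum σ R (n + 2) (by omega),
        sum_antidiagonal_filter_Ioo (fun i j => (-1) ^ i * esymm σ R i * psum σ R j),
        Nat.add_succ_sub_one, sub_eq_add_neg, ← sum_neg_distrib, add_comm]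
      refine congrArg₂ (· + ·) (by ring) (sum_congr rfl fun k hk => ?_)
      simp only [mem_Icc] at hk
      rw [ih _ (by omega) (by omega), ← Nat.sub_add_cancel hk.1, pow_succ]
      simp

theorem MvPolynomial.psum_mul_eq_pow (σ : Type*) [Fintype σ] {p : ℕ} (hp : p.Prime)
    [CharP R p] (n : ℕ) : psum σ R (p * n) = psum σ R n ^ p := by
  have := Fact.mk hp
  simp only [psum, sum_pow_char, ← pow_mul, mul_comm p n]

theorem MvPolynomial.esymm_eq_zero_of_card_lt (σ : Type*) [Fintype σ] {k : ℕ}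
    (h : Fintype.card σ < k) : esymm σ R k = 0 := by
  rw [esymm, powersetCard_eq_empty.2 (by simpa using h), sum_empty]

theorem MvPolynomial.aeval_esymm_fin_injective (m : ℕ) :
    Function.Injective (aeval (R := R) fun i : Fin m => esymm (Fin m) R (i + 1)) := by
  intro a b hab
  refine esymmAlgHom_fin_injective R le_rfl (Subtype.ext ?_)
  rwa [esymmAlgHom_apply, esymmAlgHom_apply]

variable (R) in
/-- Zero beyond `m`, in accordance with `esymm (Fin m) R k = 0` for `k > m`. -/
noncomputable def finVarSeq (m k : ℕ) : MvPolynomial (Fin m) R :=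
  if h : 1 ≤ k ∧ k ≤ m then X ⟨k - 1, by omega⟩ else 0

theorem aeval_esymm_finVarSeq {m k : ℕ} (hk : 1 ≤ k) :
    aeval (R := R) (fun i : Fin m => esymm (Fin m) R (i + 1)) (finVarSeq R m k) =
      esymm (Fin m) R k := by
  unfold finVarSeq
  split_ifs with h
  · rw [aeval_X, Nat.sub_add_cancel hk]
  · rw [map_zero, esymm_eq_zero_of_card_lt _ (by simp; omega)]

theorem eval_finVarSeq (t : ℕ → R) {m k : ℕ} (hk : k ∈ Icc 1 m) :
    eval (fun i : Fin m => t (i + 1)) (finVarSeq R m k) = t k := by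
  rw [mem_Icc] at hk
  rw [finVarSeq, dif_pos hk, eval_X, Nat.sub_add_cancel hk.1]

theorem newton_finVarSeq_mul_eq_pow {p : ℕ} (hp : p.Prime) [CharP R p] (m : ℕ) {n : ℕ}
    (hn : 1 ≤ n) : newton (finVarSeq R m) (p * n) = newton (finVarSeq R m) n ^ p := by
  have hpn : 1 ≤ p * n := Nat.one_le_iff_ne_zero.2 (Nat.mul_ne_zero hp.ne_zero (by omega))
  let φ := (aeval (R := R) fun i : Fin m => esymm (Fin m) R (i + 1)).toRingHom
  have hφ : ∀ n, 1 ≤ n → φ (newton (finVarSeq R m) n) = psum (Fin m) R n := fun n hn => by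
    rw [map_newton, ← newton_esymm _ hn]
    exact newton_congr fun k hk => aeval_esymm_finVarSeq (mem_Icc.1 hk).1
  apply aeval_esymm_fin_injective m
  change φ _ = φ _
  rw [map_pow, hφ _ hpn, hφ _ hn, psum_mul_eq_pow _ hp]

end

/-- If `R` is a commutative ring of characteristic `p` (a prime), then the Newton
sequence of any `t : ℕ → R` satisfies `N (p * n) = (N n) ^ p` for all `n ≥ 1`. -/
theorem newton_mul_prime_eq_pow {p : ℕ} (hp : p.Prime) {R : Type*} [CommRing R]
    [CharP R p] (t : ℕ → R) :
    ∀ n : ℕ, 1 ≤ n → newton t (p * n) = (newton t n) ^ p := by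
  intro n hn
  have hle : n ≤ p * n := Nat.le_mul_of_pos_left n hp.pos
  let ev := eval fun i : Fin (p * n) => t (i + 1)
  have hev : ∀ l ≤ p * n, ev (newton (finVarSeq R (p * n)) l) = newton t l := fun l hl => by
    rw [map_newton]
    exact newton_congr fun k hk => eval_finVarSeq t (Icc_subset_Icc_right hl hk)
  rw [← hev _ le_rfl, ← hev n hle, newton_finVarSeq_mul_eq_pow hp _ hn, map_pow]
end

section
/- Let p be an odd prime, let A = 𝔽_p[ξ₁, ξ₂, …] be the polynomial ring over ZMod p in variables ξ(k) for k ≥ 1, define t : ℕ → A by t(n) = ξ(k) if n = p^k − 1 for some k ≥ 1 and t(n) = 0 otherwise, and let N be the Newton sequence of t. Then N((p²+1)(p−1)) = N(p²−1) · N(p−1)^{p(p−1)}. -/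
namespace NewtonAux

open MvPolynomial Finset

noncomputable def Tg (p c a : ℕ) : MvPolynomial ℕ+ (ZMod p) :=
  (-1) ^ (c + a + 1) * ((c - a * p).choose a : MvPolynomial ℕ+ (ZMod p)) *
    X (2 : ℕ+) ^ a * X (1 : ℕ+) ^ (c - a * (p + 1))

noncomputable def Gg (p c : ℕ) : MvPolynomial ℕ+ (ZMod p) :=
  ∑ a ∈ Finset.range (c / (p + 1) + 1), Tg p c a

noncomputable def Fm (p n : ℕ) : MvPolynomial ℕ+ (ZMod p) :=
  if (p - 1) ∣ n ∧ 0 < n then Gg p (n / (p - 1)) else 0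

lemma neg_one_pow_congr {R : Type*} [Ring R] {m n : ℕ}
    (h : m % 2 = n % 2) : (-1 : R) ^ m = (-1) ^ n := by
  rw [neg_one_pow_eq_pow_mod_two, h, ← neg_one_pow_eq_pow_mod_two]

lemma neg_one_pow_congr' {R : Type*} [Ring R] {m n : ℕ}
    (h : m % 2 = (n + 1) % 2) : (-1 : R) ^ m = -(-1) ^ n := by
  rw [neg_one_pow_congr h, pow_succ, mul_neg_one]

lemma Gg_zero (p : ℕ) : Gg p 0 = -1 := by
  simp [Gg, Tg]

lemma Gg_small {p c : ℕ} (hc : c ≤ p) : Gg p c = (-1) ^ (c + 1) * X (1 : ℕ+) ^ c := by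
  have h : c / (p + 1) = 0 := Nat.div_eq_of_lt (by omega)
  simp [Gg, h, Tg]

lemma Gg_one {p : ℕ} (hp : 1 ≤ p) : Gg p 1 = X (1 : ℕ+) := by
  rw [Gg_small hp]; norm_num

lemma Gg_rec {p c : ℕ} (hp2 : p % 2 = 1) (hp3 : 3 ≤ p) (hc : 1 ≤ c) :
    Gg p c = -(X (1 : ℕ+)) * Gg p (c - 1) -
      (if p + 1 ≤ c then X (2 : ℕ+) * Gg p (c - (p + 1)) else 0) := by
  obtain ⟨c', rfl⟩ : ∃ c', c = c' + 1 := ⟨c - 1, by omega⟩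
  by_cases hcp : c' + 1 ≤ p
  · rw [if_neg (by omega), Gg_small hcp, Gg_small (show c' + 1 - 1 ≤ p by omega)]
    simp only [Nat.add_sub_cancel, sub_zero]
    ring
  · push_neg at hcp
    rw [if_pos (by omega)]
    set c := c' + 1 with hcdef
    set A := c / (p + 1) with hA
    have hA1 : 1 ≤ A := Nat.one_le_div_iff (by omega) |>.mpr (by omega)
    have hterm : ∀ a ∈ Finset.range (A + 1),
        Tg p c a = -(X (1:ℕ+) * Tg p (c-1) a) +
          (if a = 0 then 0 else -(X (2:ℕ+) * Tg p (c - (p+1)) (a-1))) := by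
      intro a ha
      rw [Finset.mem_range] at ha
      have hale : a * (p + 1) ≤ c := by
        calc a * (p+1) ≤ A * (p+1) := Nat.mul_le_mul_right _ (by omega)
        _ ≤ c := Nat.div_mul_le_self c (p+1)
      rcases Nat.eq_zero_or_pos a with rfl | hapos
      · simp only [Tg, if_pos rfl, if_true, add_zero, Nat.mul_zero, Nat.zero_mul,
          Nat.sub_zero, Nat.choose_zero_right, Nat.cast_one, mul_one, pow_zero, hcdef,
          Nat.add_sub_cancel]
        ring
      · rw [if_neg (by omega)]
        obtain ⟨b, rfl⟩ : ∃ b, a = b + 1 := ⟨a - 1, by omega⟩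
        simp only [Nat.add_sub_cancel, Tg]
        have hbp : (b+1)*p = b*p + p := by ring
        have hbq : (b+1)*(p+1) = b*(p+1) + (p+1) := by ring
        have hbr : (b+1)*(p+1) = (b+1)*p + (b+1) := by ring
        have s1 : (-1 : MvPolynomial ℕ+ (ZMod p)) ^ (c - 1 + (b+1) + 1)
            = -(-1) ^ (c + (b+1) + 1) := neg_one_pow_congr' (by omega)
        have s2 : (-1 : MvPolynomial ℕ+ (ZMod p)) ^ (c - (p+1) + b + 1)
            = -(-1) ^ (c + (b+1) + 1) := neg_one_pow_congr' (by omega)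
        rcases Nat.lt_or_ge ((b+1)*(p+1)) c with hlt | hge
        · obtain ⟨D, hD⟩ : ∃ D, c - (b+1)*p = D + 1 := ⟨c - (b+1)*p - 1, by omega⟩
          obtain ⟨E, hE⟩ : ∃ E, c - (b+1)*(p+1) = E + 1 := ⟨c - (b+1)*(p+1) - 1, by omega⟩
          have r1 : c - 1 - (b+1)*p = D := by omega
          have r2 : c - (p+1) - b*p = D := by omega
          have r3 : c - (p+1) - b*(p+1) = E + 1 := by omega
          have r4 : c - 1 - (b+1)*(p+1) = E := by omega
          rw [hD, hE, r1, r2, r3, r4, s1, s2, Nat.choose_succ_succ, Nat.cast_add]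
          ring
        · have heq : (b+1)*(p+1) = c := le_antisymm hale hge
          have h1 : c - (b+1) * p = b + 1 := by omega
          have h2 : c - 1 - (b+1) * p = b := by omega
          have h3 : c - (p+1) - b * p = b := by omega
          have h4 : c - (p+1) - b*(p+1) = 0 := by omega
          have h5 : c - (b+1)*(p+1) = 0 := by omega
          have h6 : c - 1 - (b+1)*(p+1) = 0 := by omega
          rw [h1, h2, h3, h4, h5, h6, Nat.choose_succ_self, Nat.choose_self, Nat.choose_self,
            s1, s2]
          simp only [Nat.cast_zero, Nat.cast_one]
          ring
    rw [Gg, Finset.sum_congr rfl hterm, Finset.sum_add_distrib]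
    have hS1 : ∑ a ∈ Finset.range (A + 1), -(X (1:ℕ+) * Tg p (c-1) a)
        = -(X (1:ℕ+)) * Gg p (c - 1) := by
      simp only [← neg_mul, ← Finset.mul_sum]
      congr 1
      rw [Gg]
      refine (Finset.sum_subset (Finset.range_subset_range.mpr ?_) ?_).symm
      · have : (c-1)/(p+1) ≤ A := Nat.div_le_div_right (by omega)
        omega
      · intro x hx hx'
        rw [Finset.mem_range] at hx hx'
        push_neg at hx'
        have h1 : x * (p+1) ≤ c := by
          calc x * (p+1) ≤ A * (p+1) := Nat.mul_le_mul_right _ (by omega)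
          _ ≤ c := Nat.div_mul_le_self c (p+1)
        have h2 : c - 1 < x * (p+1) :=
          (Nat.div_lt_iff_lt_mul (show 0 < p + 1 by omega)).mp (show (c-1)/(p+1) < x by omega)
        have hxe : x * (p+1) = c := by omega
        have hx1 : 1 ≤ x := by
          rcases Nat.eq_zero_or_pos x with rfl | h
          · omega
          · exact h
        have hxp : x * (p+1) = x * p + x := by ring
        have hxx : c - 1 - x * p = x - 1 := by omega
        rw [Tg, hxx, Nat.choose_eq_zero_of_lt (by omega)]
        simp
    have hS2 : ∑ a ∈ Finset.range (A + 1),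
          (if a = 0 then 0 else -(X (2:ℕ+) * Tg p (c - (p+1)) (a-1)))
        = -(X (2:ℕ+) * Gg p (c - (p+1))) := by
      rw [Finset.sum_range_succ']
      simp only [if_pos rfl, add_zero, Nat.add_sub_cancel, if_neg (Nat.succ_ne_zero _)]
      simp only [← neg_mul, ← Finset.mul_sum]
      rw [Gg]
      have hdiv : (c - (p+1))/(p+1) + 1 = A := by
        rw [hA]
        exact (Nat.div_eq_sub_div (show 0 < p + 1 by omega) (show p + 1 ≤ c by omega)).symm
      rw [hdiv]
      simp
    rw [hS1, hS2]
    ring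

lemma sq_fact {p : ℕ} (hp3 : 3 ≤ p) : (p-1)*(p+1) + 1 = p*p := by
  have h : p - 1 + 1 = p := by omega
  calc (p-1)*(p+1) + 1 = (p-1)*p + ((p-1) + 1) := by ring
  _ = (p-1)*p + 1*p := by omega
  _ = ((p-1)+1)*p := by ring
  _ = p*p := by rw [h]

lemma Fm_rec {p n : ℕ} (hp2 : p % 2 = 1) (hp3 : 3 ≤ p) (hn : 2 ≤ n) :
    Fm p n = -(X (1 : ℕ+)) * Fm p (n - (p-1)) - X (2 : ℕ+) * Fm p (n - (p^2-1))
      + (if n = p - 1 then X (1:ℕ+) else 0) + (if n = p^2 - 1 then X (2:ℕ+) else 0) := by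
  have hpp : p^2 = p*p := pow_two p
  have hsq := sq_fact hp3
  have hsq' : p^2 - 1 = (p-1)*(p+1) := by omega
  by_cases hd : (p-1) ∣ n
  · obtain ⟨c, rfl⟩ := hd
    rcases Nat.eq_zero_or_pos c with rfl | hc1
    · simp at hn
    have hdivc : (p-1)*c/(p-1) = c := Nat.mul_div_cancel_left _ (by omega)
    have hFn : Fm p ((p-1)*c) = Gg p c := by
      rw [Fm, if_pos ⟨⟨c, rfl⟩, Nat.mul_pos (by omega) hc1⟩, hdivc]
    have e1 : (p-1)*c - (p-1) = (p-1)*(c-1) := by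
      cases c with
      | zero => omega
      | succ c0 => simp [Nat.mul_succ]
    have e2 : (p-1)*c - (p^2-1) = (p-1)*(c-(p+1)) := by
      rw [hsq']
      rcases le_or_gt c (p+1) with h | h
      · have h1 : (p-1)*c ≤ (p-1)*(p+1) := Nat.mul_le_mul_left _ h
        have h2 : c - (p+1) = 0 := by omega
        rw [h2, Nat.mul_zero]
        omega
      · have hc2 : (p+1) + (c - (p+1)) = c := by omega
        have h3 : (p-1)*((p+1) + (c-(p+1))) = (p-1)*(p+1) + (p-1)*(c-(p+1)) := Nat.mul_add _ _ _
        rw [hc2] at h3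
        omega
    have hd1 : ((p-1)*c = p - 1) ↔ c = 1 := by
      constructor
      · intro h
        have : (p-1)*c = (p-1)*1 := by omega
        exact Nat.eq_of_mul_eq_mul_left (by omega) this
      · rintro rfl; omega
    have hd2 : ((p-1)*c = p^2 - 1) ↔ c = p+1 := by
      constructor
      · intro h
        rw [hsq'] at h
        exact Nat.eq_of_mul_eq_mul_left (by omega) h
      · rintro rfl; omega
    rcases Nat.lt_or_ge c 2 with hc2 | hc2
    · have hc : c = 1 := by omega
      subst hc
      rw [hFn, Gg_one (by omega), e1, e2, show (1:ℕ) - (p+1) = 0 by omega,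
        show (1:ℕ) - 1 = 0 by omega]
      simp only [Nat.mul_zero]
      rw [show Fm p 0 = 0 by simp [Fm]]
      rw [if_pos (hd1.mpr rfl), if_neg (fun h => by have := hd2.mp h; omega)]
      ring
    · have hFn1 : Fm p ((p-1)*c - (p-1)) = Gg p (c-1) := by
        rw [e1, Fm, if_pos ⟨⟨c-1, rfl⟩, Nat.mul_pos (by omega) (by omega)⟩,
          Nat.mul_div_cancel_left _ (by omega)]
      rw [hFn, hFn1, e2,
        if_neg (show ¬((p-1)*c = p-1) from fun h => by have := hd1.mp h; omega),
        Gg_rec hp2 hp3 (by omega)]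
      by_cases hpc : p + 1 ≤ c
      · rcases Nat.eq_or_lt_of_le hpc with heq | hlt
        · rw [if_pos hpc, ← heq]
          rw [show p + 1 - (p+1) = 0 by omega]
          simp only [Nat.mul_zero]
          rw [show Fm p 0 = 0 by simp [Fm], Gg_zero]
          rw [if_pos hsq'.symm]
          ring
        · rw [if_pos hpc]
          have hthis : Fm p ((p-1)*(c-(p+1))) = Gg p (c-(p+1)) := by
            rw [Fm, if_pos ⟨⟨c-(p+1), rfl⟩, Nat.mul_pos (by omega) (by omega)⟩,
              Nat.mul_div_cancel_left _ (by omega)]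
          rw [hthis, if_neg (show ¬((p-1)*c = p^2-1) from fun h => by have := hd2.mp h; omega)]
          ring
      · rw [if_neg hpc]
        have hz : c - (p+1) = 0 := by omega
        rw [hz]
        simp only [Nat.mul_zero]
        rw [show Fm p 0 = 0 by simp [Fm],
          if_neg (show ¬((p-1)*c = p^2-1) from fun h => by have := hd2.mp h; omega)]
        ring
  · have hn1 : n ≠ p - 1 := fun h => hd (h ▸ dvd_refl _)
    have hn2 : n ≠ p^2 - 1 := fun h => hd (h ▸ ⟨p+1, hsq'⟩)
    rw [Fm, if_neg (by tauto)]
    have hz1 : Fm p (n - (p-1)) = 0 := by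
      rcases Nat.lt_or_ge n (p-1) with h | h
      · rw [show n - (p-1) = 0 by omega]; simp [Fm]
      · rw [Fm, if_neg]
        rintro ⟨hdd, hpos⟩
        have e : n - (p-1) + (p-1) = n := by omega
        exact hd (e ▸ Nat.dvd_add hdd (dvd_refl _))
    have hz2 : Fm p (n - (p^2-1)) = 0 := by
      rcases Nat.lt_or_ge n (p^2-1) with h | h
      · rw [show n - (p^2-1) = 0 by omega]; simp [Fm]
      · rw [Fm, if_neg]
        rintro ⟨hdd, hpos⟩
        have e : n - (p^2-1) + (p^2-1) = n := by omega
        exact hd (e ▸ Nat.dvd_add hdd ⟨p+1, hsq'⟩)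
    rw [hz1, hz2, if_neg hn1, if_neg hn2]
    ring

lemma newton_zero {R : Type*} [CommRing R] (t : ℕ → R) : newton t 0 = 0 := by rw [newton]

lemma cube_gt {p : ℕ} (hp3 : 3 ≤ p) : (p^2+1)*(p-1) < p^3 - 1 := by
  have h1 : p^2 = p*p := pow_two p
  have h : p - 1 + 1 = p := by omega
  have e : (p^2+1)*(p-1) + (p^2+1) = p^3 + p := by
    calc (p^2+1)*(p-1) + (p^2+1) = (p^2+1)*((p-1)+1) := by ring
    _ = (p^2+1)*p := by rw [h]
    _ = p^3 + p := by ring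
  have hpp : p < p*p := by nlinarith
  omega

lemma t_eq_zero_of_ne {p : ℕ} (hp3 : 3 ≤ p) (t : ℕ → MvPolynomial ℕ+ (ZMod p))
    (ht0 : ∀ n : ℕ, (∀ k : ℕ, 1 ≤ k → n ≠ p ^ k - 1) → t n = 0)
    {k : ℕ} (hk1 : k ≠ p - 1) (hk2 : k ≠ p^2 - 1) (hk3 : k < p^3 - 1) : t k = 0 := by
  apply ht0
  intro j hj hkj
  by_cases hj1 : j = 1
  · subst hj1; rw [pow_one] at hkj; exact hk1 hkj
  by_cases hj2 : j = 2
  · subst hj2; exact hk2 hkj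
  have h3 : 3 ≤ j := by omega
  have : p^3 ≤ p^j := Nat.pow_le_pow_right (by omega) h3
  omega

lemma t_p1 {p : ℕ} (ξ : ℕ → MvPolynomial ℕ+ (ZMod p)) (hξ : ∀ k : ℕ+, ξ k = X k)
    (t : ℕ → MvPolynomial ℕ+ (ZMod p)) (ht1 : ∀ k : ℕ, 1 ≤ k → t (p ^ k - 1) = ξ k) :
    t (p - 1) = X (1 : ℕ+) := by
  have h := ht1 1 (le_refl 1)
  rw [pow_one] at h
  rw [h]
  simpa using hξ 1

lemma t_p2 {p : ℕ} (ξ : ℕ → MvPolynomial ℕ+ (ZMod p)) (hξ : ∀ k : ℕ+, ξ k = X k)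
    (t : ℕ → MvPolynomial ℕ+ (ZMod p)) (ht1 : ∀ k : ℕ, 1 ≤ k → t (p ^ k - 1) = ξ k) :
    t (p^2 - 1) = X (2 : ℕ+) := by
  rw [ht1 2 (by omega)]
  simpa using hξ 2

lemma newton_rec {p : ℕ} (hp2 : p % 2 = 1) (hp3 : 3 ≤ p)
    (ξ : ℕ → MvPolynomial ℕ+ (ZMod p)) (hξ : ∀ k : ℕ+, ξ k = X k)
    (t : ℕ → MvPolynomial ℕ+ (ZMod p)) (ht1 : ∀ k : ℕ, 1 ≤ k → t (p ^ k - 1) = ξ k)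
    (ht0 : ∀ n : ℕ, (∀ k : ℕ, 1 ≤ k → n ≠ p ^ k - 1) → t n = 0)
    {m : ℕ} (hm : m + 2 ≤ (p^2+1)*(p-1)) :
    newton t (m+2) = -(X (1:ℕ+)) * newton t (m+2-(p-1)) - X (2:ℕ+) * newton t (m+2-(p^2-1))
      + (if m+2 = p - 1 then X (1:ℕ+) else 0) + (if m+2 = p^2 - 1 then X (2:ℕ+) else 0) := by
  have hcube := cube_gt hp3
  have hpp : p^2 = p*p := pow_two p
  have hp9 : 9 ≤ p^2 := by nlinarith
  have hplt : p < p^2 := by nlinarith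
  have hppmod : p^2 % 2 = 1 := by rw [hpp, Nat.mul_mod, hp2]
  rw [newton, Finset.sum_attach (Finset.Icc 1 (m+1))
    (fun k => (-1 : MvPolynomial ℕ+ (ZMod p)) ^ (k - 1) * t k * newton t (m + 2 - k))]
  have hterm : ∀ k ∈ Finset.Icc 1 (m+1),
      (-1 : MvPolynomial ℕ+ (ZMod p)) ^ (k - 1) * t k * newton t (m + 2 - k)
      = (if k = p-1 then -(X (1:ℕ+)) * newton t (m+2-(p-1)) else 0)
        + (if k = p^2-1 then -(X (2:ℕ+)) * newton t (m+2-(p^2-1)) else 0) := by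
    intro k hk
    rw [Finset.mem_Icc] at hk
    by_cases hk1 : k = p-1
    · subst hk1
      rw [if_pos rfl, if_neg (by omega), t_p1 ξ hξ t ht1]
      rw [show (-1 : MvPolynomial ℕ+ (ZMod p)) ^ (p - 1 - 1) = -1 by
        rw [neg_one_pow_eq_pow_mod_two, show (p-1-1) % 2 = 1 by omega, pow_one]]
      ring
    by_cases hk2 : k = p^2-1
    · subst hk2
      rw [if_neg hk1, if_pos rfl, t_p2 ξ hξ t ht1]
      rw [show (-1 : MvPolynomial ℕ+ (ZMod p)) ^ (p^2 - 1 - 1) = -1 by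
        rw [neg_one_pow_eq_pow_mod_two, show (p^2-1-1) % 2 = 1 by omega, pow_one]]
      ring
    · rw [t_eq_zero_of_ne hp3 t ht0 hk1 hk2 (by omega), if_neg hk1, if_neg hk2]
      simp
  rw [Finset.sum_congr rfl hterm, Finset.sum_add_distrib,
    Finset.sum_ite_eq' (Finset.Icc 1 (m+1)) (p-1),
    Finset.sum_ite_eq' (Finset.Icc 1 (m+1)) (p^2-1)]
  have hmem1 : (if (p-1) ∈ Finset.Icc 1 (m+1)
        then -(X (1:ℕ+)) * newton t (m+2-(p-1)) else 0)
      = -(X (1:ℕ+)) * newton t (m+2-(p-1)) := by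
    by_cases h : p - 1 ∈ Finset.Icc 1 (m+1)
    · rw [if_pos h]
    · rw [if_neg h]
      rw [Finset.mem_Icc] at h
      rw [show m + 2 - (p-1) = 0 by omega, newton_zero]
      ring
  have hmem2 : (if (p^2-1) ∈ Finset.Icc 1 (m+1)
        then -(X (2:ℕ+)) * newton t (m+2-(p^2-1)) else 0)
      = -(X (2:ℕ+)) * newton t (m+2-(p^2-1)) := by
    by_cases h : p^2 - 1 ∈ Finset.Icc 1 (m+1)
    · rw [if_pos h]
    · rw [if_neg h]
      rw [Finset.mem_Icc] at h
      rw [show m + 2 - (p^2-1) = 0 by omega, newton_zero]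
      ring
  rw [hmem1, hmem2]
  have hcastp : ((p : ℕ) : MvPolynomial ℕ+ (ZMod p)) = 0 := by
    rw [← map_natCast (C : ZMod p →+* MvPolynomial ℕ+ (ZMod p)) p, ZMod.natCast_self, map_zero]
  have hdelta : (-1 : MvPolynomial ℕ+ (ZMod p)) ^ (m + 1) *
        ((m + 2 : ℕ) : MvPolynomial ℕ+ (ZMod p)) * t (m + 2)
      = (if m+2 = p - 1 then X (1:ℕ+) else 0) + (if m+2 = p^2 - 1 then X (2:ℕ+) else 0) := by
    by_cases h1 : m+2 = p-1
    · rw [if_pos h1, if_neg (by omega), h1, t_p1 ξ hξ t ht1]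
      rw [show ((p - 1 : ℕ) : MvPolynomial ℕ+ (ZMod p)) = -1 by
        rw [Nat.cast_sub (by omega), hcastp, Nat.cast_one]; ring]
      rw [show (-1 : MvPolynomial ℕ+ (ZMod p)) ^ (m+1) = -1 by
        rw [neg_one_pow_eq_pow_mod_two, show (m+1) % 2 = 1 by omega, pow_one]]
      ring
    by_cases h2 : m+2 = p^2-1
    · rw [if_neg h1, if_pos h2, h2, t_p2 ξ hξ t ht1]
      rw [show ((p^2 - 1 : ℕ) : MvPolynomial ℕ+ (ZMod p)) = -1 by
        rw [Nat.cast_sub (by omega), Nat.cast_pow, hcastp, Nat.cast_one]; ring]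
      rw [show (-1 : MvPolynomial ℕ+ (ZMod p)) ^ (m+1) = -1 by
        rw [neg_one_pow_eq_pow_mod_two, show (m+1) % 2 = 1 by omega, pow_one]]
      ring
    · rw [t_eq_zero_of_ne hp3 t ht0 h1 h2 (by omega), if_neg h1, if_neg h2]
      simp
  rw [hdelta]
  ring

lemma key {p : ℕ} (hp2 : p % 2 = 1) (hp3 : 3 ≤ p)
    (ξ : ℕ → MvPolynomial ℕ+ (ZMod p)) (hξ : ∀ k : ℕ+, ξ k = X k)
    (t : ℕ → MvPolynomial ℕ+ (ZMod p)) (ht1 : ∀ k : ℕ, 1 ≤ k → t (p ^ k - 1) = ξ k)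
    (ht0 : ∀ n : ℕ, (∀ k : ℕ, 1 ≤ k → n ≠ p ^ k - 1) → t n = 0) :
    ∀ n, n ≤ (p^2+1)*(p-1) → newton t n = Fm p n := by
  have hp4 : 4 ≤ p^2 := by nlinarith
  intro n
  induction n using Nat.strong_induction_on with
  | _ n ih =>
    intro hn
    match n, ih with
    | 0, ih => rw [newton_zero]; simp [Fm]
    | 1, ih =>
      rw [newton]
      rw [ht0 1 (by
        intro j hj h1
        have hle : p ≤ p^j := Nat.le_self_pow (by omega) p
        omega)]
      rw [Fm, if_neg]
      rintro ⟨hdd, -⟩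
      have := Nat.le_of_dvd one_pos hdd
      omega
    | (m+2), ih =>
      rw [newton_rec hp2 hp3 ξ hξ t ht1 ht0 hn]
      rw [ih (m+2-(p-1)) (by omega) (le_trans (Nat.sub_le _ _) hn),
        ih (m+2-(p^2-1)) (by omega) (le_trans (Nat.sub_le _ _) hn)]
      exact (Fm_rec hp2 hp3 (by omega)).symm

end NewtonAux

open MvPolynomial in
/-- In `A = 𝔽_p[ξ₁, ξ₂, …]` (formally `MvPolynomial ℕ+ (ZMod p)`, `p` an odd prime)
with `ξ 0 = 1`, `ξ k = X k` for `k ≥ 1`, and `t n = ξ k` if `n = p^k - 1` for some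
`k ≥ 1`, `t n = 0` otherwise, the Newton sequence of `t` satisfies: -/
theorem newton_Qp2_xibar1_relation (p : ℕ) (hp : p.Prime) (hodd : Odd p)
    (ξ : ℕ → MvPolynomial ℕ+ (ZMod p)) (hξ0 : ξ 0 = 1)
    (hξ : ∀ k : ℕ+, ξ k = X k)
    (t : ℕ → MvPolynomial ℕ+ (ZMod p))
    (ht1 : ∀ k : ℕ, 1 ≤ k → t (p ^ k - 1) = ξ k)
    (ht0 : ∀ n : ℕ, (∀ k : ℕ, 1 ≤ k → n ≠ p ^ k - 1) → t n = 0) :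
    newton t ((p ^ 2 + 1) * (p - 1)) = newton t (p ^ 2 - 1) * (newton t (p - 1)) ^ (p * (p - 1)) := by
  open NewtonAux in
  haveI : Fact p.Prime := ⟨hp⟩
  have hp2 : p % 2 = 1 := Nat.odd_iff.mp hodd
  have hp3 : 3 ≤ p := by have := hp.two_le; omega
  have hpp : p^2 = p*p := pow_two p
  have hsq := sq_fact hp3
  have hsq' : p^2 - 1 = (p-1)*(p+1) := by omega
  have hplt : p < p^2 := by nlinarith
  have hcastp : ((p : ℕ) : MvPolynomial ℕ+ (ZMod p)) = 0 := by
    rw [← map_natCast (C : ZMod p →+* MvPolynomial ℕ+ (ZMod p)) p, ZMod.natCast_self, map_zero]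
  have hkey := key hp2 hp3 ξ hξ t ht1 ht0
  -- N(p-1) = X 1
  have h1 : newton t (p-1) = X (1:ℕ+) := by
    rw [hkey (p-1) (Nat.le_mul_of_pos_left (p-1) (by omega))]
    rw [Fm, if_pos ⟨dvd_refl _, by omega⟩, Nat.div_self (by omega), Gg_one (by omega)]
  -- N(p^2-1) = X 2 - X 1 ^ (p+1)
  have h2 : newton t (p^2-1) = Gg p (p+1) := by
    rw [hkey (p^2-1) (by
      have h := Nat.mul_le_mul_left (p^2+1) (show 1 ≤ p-1 by omega)
      omega)]
    rw [Fm, if_pos ⟨⟨p+1, hsq'⟩, by omega⟩, hsq', Nat.mul_div_cancel_left _ (by omega)]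
  have hGp1 : Gg p (p+1) = X (2:ℕ+) - X (1:ℕ+)^(p+1) := by
    rw [Gg, Nat.div_self (by omega)]
    rw [Finset.sum_range_succ, Finset.sum_range_one, Tg, Tg]
    rw [show p + 1 - 1*p = 1 by omega, show p + 1 - 1*(p+1) = 0 by omega]
    simp only [Nat.zero_mul, Nat.sub_zero, Nat.choose_zero_right, Nat.choose_self,
      Nat.cast_one, pow_zero, mul_one, one_mul, pow_one]
    rw [show (-1 : MvPolynomial ℕ+ (ZMod p)) ^ (p+1+0+1) = -1 by
      rw [neg_one_pow_eq_pow_mod_two, show (p+1+0+1) % 2 = 1 by omega, pow_one]]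
    rw [show (-1 : MvPolynomial ℕ+ (ZMod p)) ^ (p+1+1+1) = 1 by
      rw [neg_one_pow_eq_pow_mod_two, show (p+1+1+1) % 2 = 0 by omega, pow_zero]]
    ring
  -- N(Nmax) = Gg p (p^2+1)
  have h3 : newton t ((p^2+1)*(p-1)) = Gg p (p^2+1) := by
    rw [hkey _ (le_refl _), Fm, if_pos ⟨⟨p^2+1, by ring⟩, Nat.mul_pos (by omega) (by omega)⟩]
    rw [show (p^2+1)*(p-1) = (p-1)*(p^2+1) by ring, Nat.mul_div_cancel_left _ (by omega)]
  have hcomm : (p+1)*(p-1) = (p-1)*(p+1) := Nat.mul_comm _ _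
  have hdiv2 : (p^2+1)/(p+1) = p-1 := by
    have e2 : p^2+1 = (p+1)*(p-1) + 2 := by omega
    rw [e2, Nat.mul_add_div (by omega), Nat.div_eq_of_lt (by omega)]
    omega
  have hppmod : p^2 % 2 = 1 := by
    rw [Nat.pow_mod, hp2]
  have hm1 : p*(p-1) + p*1 = p*p := by
    rw [← Nat.mul_add]
    congr 1
    omega
  have hG2 : Gg p (p^2+1) = X (2:ℕ+) * X (1:ℕ+)^(p^2-p) - X (1:ℕ+)^(p^2+1) := by
    rw [Gg, hdiv2, show p - 1 + 1 = p by omega]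
    rw [← Finset.sum_range_add_sum_Ico _ (show 2 ≤ p by omega)]
    have htail : ∑ a ∈ Finset.Ico 2 p, Tg p (p^2+1) a = 0 := by
      apply Finset.sum_eq_zero
      intro a ha
      rw [Finset.mem_Ico] at ha
      have hma : p*(p-a) + p*a = p*p := by
        rw [← Nat.mul_add]
        congr 1
        omega
      have hap : a*p = p*a := Nat.mul_comm a p
      have hrep : p^2+1 - a*p = p*(p-a)+1 := by omega
      have hmod := Choose.choose_modEq_choose_mod_mul_choose_div_nat
        (p := p) (n := p*(p-a)+1) (k := a)
      rw [Nat.mul_add_mod, Nat.mod_eq_of_lt (show 1 < p by omega),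
        Nat.mod_eq_of_lt (show a < p from ha.2),
        Nat.choose_eq_zero_of_lt (show 1 < a from ha.1), Nat.zero_mul] at hmod
      obtain ⟨d, hd⟩ := (Nat.modEq_zero_iff_dvd).mp hmod
      rw [Tg, hrep, hd, Nat.cast_mul, hcastp]
      ring
    rw [htail, add_zero, Finset.sum_range_succ, Finset.sum_range_one, Tg, Tg]
    have hrep1 : p^2+1 - 1*p = p*(p-1)+1 := by omega
    have hrep2 : p^2+1 - 1*(p+1) = p^2 - p := by omega
    rw [hrep1, hrep2]
    simp only [Nat.zero_mul, Nat.sub_zero, Nat.choose_zero_right, Nat.choose_one_right,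
      Nat.cast_one, pow_zero, mul_one, one_mul, pow_one]
    rw [show (-1 : MvPolynomial ℕ+ (ZMod p)) ^ (p^2+1+0+1) = -1 by
      rw [neg_one_pow_eq_pow_mod_two,
        show (p^2+1+0+1) % 2 = 1 by omega, pow_one]]
    rw [show (-1 : MvPolynomial ℕ+ (ZMod p)) ^ (p^2+1+1+1) = 1 by
      rw [neg_one_pow_eq_pow_mod_two,
        show (p^2+1+1+1) % 2 = 0 by omega, pow_zero]]
    rw [show ((p*(p-1)+1 : ℕ) : MvPolynomial ℕ+ (ZMod p)) = 1 by
      rw [Nat.cast_add, Nat.cast_mul, hcastp, Nat.cast_one]; ring]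
    ring
  -- finish
  rw [h3, hG2, h2, hGp1, h1]
  have hexp : p*(p-1) = p^2 - p := by omega
  rw [hexp, sub_mul, ← pow_add, show (p+1) + (p^2 - p) = p^2+1 by omega]
end

section
/- Let p be an odd prime, let A = 𝔽_p[ξ₁, ξ₂, …] be the polynomial ring over ZMod p in variables ξ(k) for k ≥ 1, define t : ℕ → A by t(n) = ξ(k) if n = p^k − 1 for some k ≥ 1 and t(n) = 0 otherwise, and let N be the Newton sequence of t. Then N((2p+1)(p−1)) = −N(p−1)^{p} · N(p²−1). -/
/-- Coefficients of the inverse power series of `1 + ∑_{n≥1} t n xⁿ`. -/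
noncomputable def cseq {R : Type*} [CommRing R] (t : ℕ → R) : ℕ → R
  | 0 => 1
  | n + 1 =>
      -∑ k ∈ (Finset.Icc 1 (n + 1)).attach,
        t (k : ℕ) * cseq t (n + 1 - (k : ℕ))
decreasing_by
  have hk := k.2
  simp only [Finset.mem_Icc] at hk
  omega

theorem cseq_rec {R : Type*} [CommRing R] (t : ℕ → R) (n : ℕ) (hn : 1 ≤ n) :
    cseq t n = -∑ k ∈ Finset.Icc 1 n, t k * cseq t (n - k) := by
  obtain ⟨m, rfl⟩ : ∃ m, n = m + 1 := ⟨n - 1, by omega⟩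
  rw [cseq]
  congr 1
  exact Finset.sum_attach (Finset.Icc 1 (m + 1)) (fun k => t k * cseq t (m + 1 - k))

theorem newton_rec {R : Type*} [CommRing R] (t : ℕ → R) (n : ℕ) (hn : 2 ≤ n) :
    newton t n = (∑ k ∈ Finset.Icc 1 (n - 1), (-1 : R) ^ (k - 1) * t k * newton t (n - k))
      + (-1 : R) ^ (n - 1) * (n : R) * t n := by
  obtain ⟨m, rfl⟩ : ∃ m, n = m + 2 := ⟨n - 2, by omega⟩
  rw [newton]
  congr 1
  exact Finset.sum_attach (Finset.Icc 1 (m + 1))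
    (fun k => (-1 : R) ^ (k - 1) * t k * newton t (m + 2 - k))

theorem newton_eq_cseq {R : Type*} [CommRing R] (t : ℕ → R) (h1 : t 1 = 0)
    (hdeg : ∀ n : ℕ, ((n + 1 : ℕ) : R) * t n = 0) :
    ∀ n : ℕ, 1 ≤ n → newton t n = (-1 : R) ^ (n + 1) * cseq t n := by
  intro n
  induction n using Nat.strong_induction_on with
  | _ n ih =>
    intro hn
    rcases Nat.lt_or_ge n 2 with h2 | h2
    · -- n = 1
      obtain rfl : n = 1 := by omega
      rw [newton, cseq_rec t 1 le_rfl]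
      simp [h1]
    · rw [newton_rec t n h2, cseq_rec t n (by omega)]
      have hsum : ∑ k ∈ Finset.Icc 1 (n - 1), (-1 : R) ^ (k - 1) * t k * newton t (n - k)
          = (-1 : R) ^ n * ∑ k ∈ Finset.Icc 1 (n - 1), t k * cseq t (n - k) := by
        rw [Finset.mul_sum]
        apply Finset.sum_congr rfl
        intro k hk
        simp only [Finset.mem_Icc] at hk
        rw [ih (n - k) (by omega) (by omega)]
        have he : (-1 : R) ^ (k - 1) * (-1 : R) ^ (n - k + 1) = (-1 : R) ^ n := by
          rw [← pow_add, show k - 1 + (n - k + 1) = n by omega]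
        calc (-1 : R) ^ (k - 1) * t k * ((-1 : R) ^ (n - k + 1) * cseq t (n - k))
            = ((-1 : R) ^ (k - 1) * (-1 : R) ^ (n - k + 1)) * (t k * cseq t (n - k)) := by ring
          _ = (-1 : R) ^ n * (t k * cseq t (n - k)) := by rw [he]
      have hlast : (-1 : R) ^ (n - 1) * (n : R) * t n = (-1 : R) ^ n * (t n * cseq t (n - n)) := by
        have h0 : ((n : ℕ) : R) * t n = - t n := by
          have := hdeg n
          push_cast at this ⊢
          linear_combination this
        have he : (-1 : R) ^ (n - 1) * (-1 : R) = (-1 : R) ^ n := by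
          have : (-1 : R) ^ (n - 1) * (-1 : R) ^ 1 = (-1 : R) ^ n := by
            rw [← pow_add, show n - 1 + 1 = n by omega]
          simpa using this
        rw [Nat.sub_self]
        calc (-1 : R) ^ (n - 1) * (n : R) * t n
            = (-1 : R) ^ (n - 1) * (((n : ℕ) : R) * t n) := by ring
          _ = (-1 : R) ^ (n - 1) * (- t n) := by rw [h0]
          _ = ((-1 : R) ^ (n - 1) * (-1 : R)) * t n := by ring
          _ = (-1 : R) ^ n * t n := by rw [he]
          _ = (-1 : R) ^ n * (t n * cseq t 0) := by rw [cseq]; ring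
      rw [hsum, hlast, ← mul_add]
      have hsplit : ∑ k ∈ Finset.Icc 1 (n - 1), t k * cseq t (n - k) + t n * cseq t (n - n)
          = ∑ k ∈ Finset.Icc 1 n, t k * cseq t (n - k) := by
        obtain ⟨m, rfl⟩ : ∃ m, n = m + 1 := ⟨n - 1, by omega⟩
        rw [Finset.sum_Icc_succ_top (by omega : 1 ≤ m + 1)]
        simp
      rw [hsplit]
      have he : (-1 : R) ^ (n + 1) = (-1 : R) ^ n * (-1 : R) := by
        rw [pow_succ]
      rw [he]
      ring

open MvPolynomial in
/-- In `A = 𝔽_p[ξ₁, ξ₂, …]` (formally `MvPolynomial ℕ+ (ZMod p)`, `p` an odd prime)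
with `ξ 0 = 1`, `ξ k = X k` for `k ≥ 1`, and `t n = ξ k` if `n = p^k - 1` for some
`k ≥ 1`, `t n = 0` otherwise, the Newton sequence of `t` satisfies: -/
theorem newton_Q2p_xibar1_relation (p : ℕ) (hp : p.Prime) (hodd : Odd p)
    (ξ : ℕ → MvPolynomial ℕ+ (ZMod p)) (hξ0 : ξ 0 = 1)
    (hξ : ∀ k : ℕ+, ξ k = X k)
    (t : ℕ → MvPolynomial ℕ+ (ZMod p))
    (ht1 : ∀ k : ℕ, 1 ≤ k → t (p ^ k - 1) = ξ k)
    (ht0 : ∀ n : ℕ, (∀ k : ℕ, 1 ≤ k → n ≠ p ^ k - 1) → t n = 0) :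
    newton t ((2 * p + 1) * (p - 1)) = -(newton t (p - 1)) ^ p * newton t (p ^ 2 - 1) := by
  have hp3 : 3 ≤ p := by
    rcases hodd with ⟨m, hm⟩
    have := hp.two_le
    omega
  -- basic arithmetic facts
  have hpp : (p + 1) * (p - 1) = p ^ 2 - 1 := by
    obtain ⟨q, rfl⟩ : ∃ q, p = q + 1 := ⟨p - 1, by omega⟩
    have h2 : (q+1)^2 = q*q + 2*q + 1 := by ring
    have h3 : (q+1+1)*(q+1-1) = q*q + 2*q := by rw [Nat.add_sub_cancel]; ring
    omega
  have hcube : (2*p+1)*(p-1) + 1 < p^3 := by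
    obtain ⟨q, rfl⟩ : ∃ q, p = q + 1 := ⟨p - 1, by omega⟩
    have h : 1 ≤ q*q := by
      have := Nat.mul_le_mul (show 1 ≤ q by omega) (show 1 ≤ q by omega); omega
    have e1 : (q+1)^3 = q*q*q + 3*(q*q) + 3*q + 1 := by ring
    have e2 : (2*(q+1)+1)*((q+1)-1) = 2*(q*q) + 3*q := by
      rw [Nat.add_sub_cancel]; ring
    omega
  have hplt : p * (p - 1) < p ^ 2 - 1 := by
    have h1 : (p+1)*(p-1) = p*(p-1) + (p-1) := by ring
    omega
  have hp2pos : 1 ≤ p ^ 2 - 1 := by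
    have : (p+1)*(p-1) ≥ 4*2 := Nat.mul_le_mul (by omega) (by omega)
    omega
  -- cast facts
  have hpA : ((p : ℕ) : MvPolynomial ℕ+ (ZMod p)) = 0 := by
    rw [← map_natCast (MvPolynomial.C : ZMod p →+* MvPolynomial ℕ+ (ZMod p)) p, ZMod.natCast_self, map_zero]
  have hm1 : (-1 : MvPolynomial ℕ+ (ZMod p)) ^ p = -1 := hodd.neg_one_pow
  have hcast1 : ((p + 1 : ℕ) : MvPolynomial ℕ+ (ZMod p)) = 1 := by push_cast [hpA]; ring
  -- hypotheses for newton_eq_cseq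
  have h1 : t 1 = 0 := by
    apply ht0
    intro k hk h
    have h2 : p ≤ p ^ k := Nat.le_self_pow (by omega) p
    omega
  have hdeg : ∀ n : ℕ, ((n + 1 : ℕ) : MvPolynomial ℕ+ (ZMod p)) * t n = 0 := by
    intro n
    by_cases hex : ∃ k, 1 ≤ k ∧ n = p ^ k - 1
    · obtain ⟨k, hk, rfl⟩ := hex
      have hpk : 1 ≤ p ^ k := Nat.one_le_pow _ _ (by omega)
      rw [show p ^ k - 1 + 1 = p ^ k from by omega]
      have hz : ((p ^ k : ℕ) : MvPolynomial ℕ+ (ZMod p)) = 0 := by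
        push_cast [hpA]
        exact zero_pow (by omega)
      rw [hz, zero_mul]
    · rw [ht0 n (fun k hk h => hex ⟨k, hk, h⟩), mul_zero]
  have hN := newton_eq_cseq t h1 hdeg
  -- vanishing of t away from p-1 and p^2-1 in the relevant range
  have tvan : ∀ b : ℕ, b ≤ (2*p+1)*(p-1) → b ≠ p - 1 → b ≠ p ^ 2 - 1 → t b = 0 := by
    intro b hble hb1 hb2
    apply ht0
    intro k hk hbk
    rcases Nat.lt_or_ge k 3 with h | h3
    · interval_cases k
      · rw [pow_one] at hbk; exact hb1 hbk
      · exact hb2 hbk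
    · have hle : p ^ 3 ≤ p ^ k := Nat.pow_le_pow_right (by omega) h3
      omega
  have hξ1 : t (p - 1) = ξ 1 := by
    have := ht1 1 le_rfl; rwa [pow_one] at this
  have hξ2 : t (p ^ 2 - 1) = ξ 2 := ht1 2 (by omega)
  have hd0 : cseq t 0 = 1 := by rw [cseq]
  -- the two-term recursion for d m := cseq t (m * (p-1))
  have Llo : ∀ m : ℕ, 1 ≤ m → m ≤ p →
      cseq t (m * (p - 1)) = -(ξ 1 * cseq t ((m - 1) * (p - 1))) := by
    intro m hm1 hm2
    have hge : p - 1 ≤ m * (p - 1) := by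
      calc p - 1 = 1 * (p - 1) := (one_mul _).symm
        _ ≤ m * (p - 1) := Nat.mul_le_mul_right _ hm1
    have hub : m * (p - 1) ≤ p * (p - 1) := Nat.mul_le_mul_right _ hm2
    have hub2 : p * (p - 1) ≤ (2*p+1) * (p - 1) := Nat.mul_le_mul_right _ (by omega)
    rw [cseq_rec t _ (by omega)]
    rw [Finset.sum_eq_single_of_mem (p - 1)
      (Finset.mem_Icc.mpr ⟨by omega, hge⟩)
      (fun b hb hbne => by
        have hb2 : b ≤ p * (p - 1) := le_trans (Finset.mem_Icc.mp hb).2 hub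
        rw [tvan b (le_trans hb2 hub2) hbne (by omega), zero_mul])]
    rw [hξ1, Nat.sub_one_mul, neg_inj]
  have Lhi : ∀ m : ℕ, p + 1 ≤ m → m ≤ 2*p + 1 →
      cseq t (m * (p - 1)) = -(ξ 1 * cseq t ((m - 1) * (p - 1))
        + ξ 2 * cseq t ((m - (p + 1)) * (p - 1))) := by
    intro m hm1 hm2
    have hge : p - 1 ≤ m * (p - 1) := by
      calc p - 1 = 1 * (p - 1) := (one_mul _).symm
        _ ≤ m * (p - 1) := Nat.mul_le_mul_right _ (by omega)
    have hge2 : p ^ 2 - 1 ≤ m * (p - 1) := by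
      rw [← hpp]; exact Nat.mul_le_mul_right _ hm1
    have hub : m * (p - 1) ≤ (2*p+1) * (p - 1) := Nat.mul_le_mul_right _ hm2
    rw [cseq_rec t _ (by omega)]
    have hsub : ({p - 1, p ^ 2 - 1} : Finset ℕ) ⊆ Finset.Icc 1 (m * (p - 1)) := by
      intro b hb
      simp only [Finset.mem_insert, Finset.mem_singleton] at hb
      rcases hb with rfl | rfl
      · exact Finset.mem_Icc.mpr ⟨by omega, hge⟩
      · exact Finset.mem_Icc.mpr ⟨by omega, hge2⟩
    have hzero : ∀ b ∈ Finset.Icc 1 (m * (p - 1)),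
        b ∉ ({p - 1, p ^ 2 - 1} : Finset ℕ) → t b * cseq t (m * (p - 1) - b) = 0 := by
      intro b hb hbn
      simp only [Finset.mem_insert, Finset.mem_singleton, not_or] at hbn
      rw [tvan b (le_trans (Finset.mem_Icc.mp hb).2 hub) hbn.1 hbn.2, zero_mul]
    rw [← Finset.sum_subset hsub hzero,
      Finset.sum_pair (show p - 1 ≠ p ^ 2 - 1 by
        have h9 : p + 1 ≤ p ^ 2 := by nlinarith
        omega)]
    rw [hξ1, hξ2, Nat.sub_one_mul, Nat.sub_mul, hpp]
  -- closed forms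
  have I1 : ∀ m : ℕ, m ≤ p → cseq t (m * (p - 1)) = (-1 : MvPolynomial ℕ+ (ZMod p)) ^ m * (ξ 1) ^ m := by
    intro m
    induction m with
    | zero => intro _; simpa using hd0
    | succ k ihk =>
      intro h
      rw [Llo (k + 1) (by omega) h, Nat.add_sub_cancel, ihk (by omega),
        pow_succ, pow_succ]
      ring
  have I2 : ∀ j : ℕ, j ≤ p →
      cseq t ((p + 1 + j) * (p - 1))
        = (-1 : MvPolynomial ℕ+ (ZMod p)) ^ j * (ξ 1) ^ (p + 1 + j)
          - (-1 : MvPolynomial ℕ+ (ZMod p)) ^ j * ((j + 1 : ℕ) : MvPolynomial ℕ+ (ZMod p)) * (ξ 1) ^ j * ξ 2 := by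
    intro j
    induction j with
    | zero =>
      intro _
      rw [Nat.add_zero, Lhi (p + 1) le_rfl (by omega), Nat.add_sub_cancel,
        Nat.sub_self, Nat.zero_mul, hd0, I1 p le_rfl, hm1]
      push_cast
      ring
    | succ j ihj =>
      intro h
      rw [show p + 1 + (j + 1) = p + 2 + j from by omega,
        Lhi (p + 2 + j) (by omega) (by omega),
        show p + 2 + j - 1 = p + 1 + j from by omega,
        show p + 2 + j - (p + 1) = j + 1 from by omega,
        ihj (by omega), I1 (j + 1) (by omega)]
      push_cast
      simp only [pow_succ]
      ring
  -- evaluate the three newton values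
  have e1 : newton t (p - 1) = ξ 1 := by
    rw [hN (p - 1) (by omega), show p - 1 + 1 = p from by omega, hm1]
    have := I1 1 (by omega)
    rw [one_mul] at this
    rw [this]
    ring
  have e2 : newton t (p ^ 2 - 1) = ξ 2 - (ξ 1) ^ (p + 1) := by
    rw [hN (p ^ 2 - 1) hp2pos, Nat.sub_add_cancel (by omega : 1 ≤ p ^ 2),
      (hodd.pow).neg_one_pow, ← hpp]
    have := I2 0 (by omega)
    rw [Nat.add_zero] at this
    rw [this]
    push_cast
    ring
  have e3 : newton t ((2*p+1) * (p - 1)) = (ξ 1) ^ (2*p+1) - (ξ 1) ^ p * ξ 2 := by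
    have heven : Even ((2*p+1) * (p - 1)) :=
      (Nat.Odd.sub_odd hodd odd_one).mul_left (2*p+1)
    have hsgn : (-1 : MvPolynomial ℕ+ (ZMod p)) ^ ((2*p+1) * (p - 1) + 1) = -1 := heven.add_one.neg_one_pow
    rw [hN _ (by
        have : 1*1 ≤ (2*p+1) * (p-1) := Nat.mul_le_mul (by omega) (by omega)
        omega),
      hsgn, show (2*p+1) * (p - 1) = (p + 1 + p) * (p - 1) from by
        rw [show 2*p+1 = p+1+p from by omega],
      I2 p le_rfl, hm1, hcast1]
    ring
  rw [e1, e2, e3]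
  ring
end

section
/- Let A be a commutative ring, let δ ∈ A satisfy δ² = 0, and let q ≥ 1 be a natural number. Define F(u,v) = u + v + δ·(u^q + v^q − (u+v)^q), and define the n-series [n](u) for u ∈ A recursively by [0](u) = 0 and [n+1](u) = F([n](u), u). Then for all n ≥ 0 and all u ∈ A, [n](u) = n·u + (n − n^q)·δ·u^q (where n denotes the image of the natural number n in A). -/
lemma delta_pow_aux {A : Type*} [CommRing A] (δ : A) (hδ : δ ^ 2 = 0)
    (x y : A) : ∀ k : ℕ, δ * (x + δ * y) ^ k = δ * x ^ k := by
  intro k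
  induction k with
  | zero => simp
  | succ k ih =>
    have h1 : δ * (x + δ * y) = δ * x := by
      have : δ * δ = 0 := by rw [← sq]; exact hδ
      ring_nf
      rw [hδ]; ring
    calc δ * (x + δ * y) ^ (k + 1)
        = (δ * (x + δ * y)) * (x + δ * y) ^ k := by ring
      _ = x * (δ * (x + δ * y) ^ k) := by rw [h1]; ring
      _ = x * (δ * x ^ k) := by rw [ih]
      _ = δ * x ^ (k + 1) := by ring

/-- Let `A` be a commutative ring, `δ ∈ A` with `δ² = 0`, and `q ≥ 1`, and let
`F u v = u + v + δ (u^q + v^q - (u+v)^q)`.  Defining the `n`-series by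
`[0](u) = 0` and `[n+1](u) = F ([n](u)) u`, one has
`[n](u) = n·u + (n - n^q)·δ·u^q` for all `n` and `u`. -/
theorem n_series_formula {A : Type*} [CommRing A] (δ : A)
    (hδ : δ ^ 2 = 0) (q : ℕ) (hq : 1 ≤ q)
    (F : A → A → A)
    (hF : ∀ u v, F u v = u + v + δ * (u ^ q + v ^ q - (u + v) ^ q))
    (s : ℕ → A → A)
    (hs0 : ∀ u, s 0 u = 0)
    (hssucc : ∀ n u, s (n + 1) u = F (s n u) u) :
    ∀ (n : ℕ) (u : A),
      s n u = (n : A) * u + ((n : A) - (n : A) ^ q) * δ * u ^ q := by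
  intro n
  induction n with
  | zero =>
    intro u
    obtain ⟨r, rfl⟩ := Nat.exists_eq_add_of_le hq
    simp [hs0, pow_succ]
  | succ n ih =>
    intro u
    have hδδ : δ * δ = 0 := by rw [← sq]; exact hδ
    rw [hssucc, hF, ih]
    have key : ∀ x y : A, δ * (x + y * δ * u ^ q) ^ q = δ * x ^ q := by
      intro x y
      have := delta_pow_aux δ hδ x (y * u ^ q) q
      rw [← this]; ring_nf
    have h1 : δ * ((n : A) * u + ((n : A) - (n : A) ^ q) * δ * u ^ q) ^ q
        = δ * ((n : A) * u) ^ q := key _ _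
    have h2 : δ * ((n : A) * u + ((n : A) - (n : A) ^ q) * δ * u ^ q + u) ^ q
        = δ * (((n : A) + 1) * u) ^ q := by
      have := key ((n : A) * u + u) ((n : A) - (n : A) ^ q)
      rw [show (n : A) * u + ((n : A) - (n : A) ^ q) * δ * u ^ q + u
          = (n : A) * u + u + ((n : A) - (n : A) ^ q) * δ * u ^ q by ring, this]
      ring_nf
    rw [mul_sub, mul_add, h1, h2]
    push_cast
    rw [mul_pow, mul_pow]
    ring
end
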